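/- Let K ⊂ Γ be compact and β > 0. Then there exists a constant C > 0, depending only on m, f, K and β, with the following property: whenever λ ∈ Γ, μ ∈ K with f(μ) ≥ f(λ), and r ∈ {1,…,m} is an index with λ_r ≥ 0 and f_r(λ) ≥ β ∑_{j=1}^m f_j(λ), one has f_r(λ)λ_r² ≤ C (∑_{i ≠ r} f_i(λ)λ_i² + ∑_{i=1}^m f_i(λ)). -/

import Mathlib

/-!
Concavity gives `f μ - f λ ≤ Df(λ)(μ - λ)`, so `f λ ≤ f μ` yields `∑ fᵢλᵢ ≤ ∑ fᵢμᵢ ≤ R ∑ fᵢ` for a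
bound `R` of the coordinates on `K`. Isolating the `r`-th term and bounding the rest by
Cauchy–Schwarz, `|∑_{i≠r} fᵢλᵢ|² ≤ (∑_{i≠r} fᵢλᵢ²)(∑ fᵢ)`, squaring (legitimate as `f_r λ_r ≥ 0`) and
dividing by `f_r ≥ β ∑ fᵢ` gives the estimate with `C = 2(R² + 1)/β`.
-/

open Filter Topology

/-- The `i`-th partial derivative `fᵢ(x) = ∂f/∂λᵢ(x)`. -/
noncomputable def pd {m : ℕ} (f : (Fin m → ℝ) → ℝ) (x : Fin m → ℝ) (i : Fin m) : ℝ :=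
  fderiv ℝ f x (Pi.single i 1)

/-- The Euclidean norm of a vector in `ℝ^m`. -/
noncomputable def eNorm {m : ℕ} (v : Fin m → ℝ) : ℝ :=
  Real.sqrt (∑ i, (v i) ^ 2)

/-- The unit normal `ν_x = Df(x)/|Df(x)|`. -/
noncomputable def nuv {m : ℕ} (f : (Fin m → ℝ) → ℝ) (x : Fin m → ℝ) : Fin m → ℝ :=
  fun i => pd f x i / eNorm (pd f x)

open Finset

theorem ConcaveOn.sub_le_fderiv {E : Type*} [NormedAddCommGroup E] [NormedSpace ℝ E]
    {s : Set E} {f : E → ℝ} {f' : E →L[ℝ] ℝ} {x y : E} (hf : ConcaveOn ℝ s f)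
    (hx : x ∈ s) (hy : y ∈ s) (hf' : HasFDerivAt f f' x) :
    f y - f x ≤ f' (y - x) := by
  set g : ℝ →ᵃ[ℝ] E := AffineMap.lineMap x y
  have hline : ConcaveOn ℝ (g ⁻¹' s) (f ∘ g) := hf.comp_affineMap g
  have hderiv : HasDerivAt (f ∘ g) (f' (y - x)) 0 :=
    (by simpa [g] using hf' : HasFDerivAt f f' (g 0)).comp_hasDerivAt 0
      AffineMap.hasDerivAt_lineMap
  simpa [g, slope_def_field] using
    hline.slope_le_of_hasDerivAt (x := 0) (y := 1) (by simpa [g] using hx) (by simpa [g] using hy)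
      zero_lt_one hderiv

theorem fderiv_apply_eq_sum_pd {m : ℕ} (f : (Fin m → ℝ) → ℝ) (x v : Fin m → ℝ) :
    fderiv ℝ f x v = ∑ i, v i * pd f x i := by
  conv_lhs => rw [← Finset.univ_sum_single v]
  refine (map_sum _ _ _).trans (sum_congr rfl fun i _ => ?_)
  rw [pd, ← smul_eq_mul, ← map_smul, ← Pi.single_smul', smul_eq_mul, mul_one]

theorem ConcaveOn.sum_pd_mul_le_of_le {m : ℕ} {Γ : Set (Fin m → ℝ)} {f : (Fin m → ℝ) → ℝ}
    (hf : ConcaveOn ℝ Γ f) {x y : Fin m → ℝ} (hx : x ∈ Γ) (hy : y ∈ Γ)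
    (hd : DifferentiableAt ℝ f x) (hxy : f x ≤ f y) :
    ∑ i, pd f x i * x i ≤ ∑ i, pd f x i * y i := by
  have h := hf.sub_le_fderiv hx hy hd.hasFDerivAt
  rw [fderiv_apply_eq_sum_pd] at h
  simp only [Pi.sub_apply, sub_mul, sum_sub_distrib] at h
  simp only [mul_comm (pd f x _)]
  linarith

theorem mul_sq_le_of_sum_mul_le {ι : Type*} [Fintype ι] [DecidableEq ι] {w x : ι → ℝ}
    (hw : ∀ i, 0 ≤ w i) {r : ι} (hxr : 0 ≤ x r) {R β : ℝ}
    (hsum : ∑ i, w i * x i ≤ R * ∑ i, w i) (hr : β * ∑ i, w i ≤ w r) :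
    β * (w r * x r ^ 2) ≤ 2 * (R ^ 2 * ∑ i, w i + ∑ i ∈ univ.erase r, w i * x i ^ 2) := by
  set S := ∑ i, w i
  set A := ∑ i ∈ univ.erase r, w i * x i ^ 2
  set B := ∑ i ∈ univ.erase r, w i * x i
  have hA : 0 ≤ A := sum_nonneg fun i _ => mul_nonneg (hw i) (sq_nonneg _)
  have hS : S = w r + ∑ i ∈ univ.erase r, w i := (add_sum_erase _ _ (mem_univ r)).symm
  have hB : B ^ 2 ≤ A * S := by
    have hCS : B ^ 2 ≤ A * ∑ i ∈ univ.erase r, w i :=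
      sum_sq_le_sum_mul_sum_of_sq_le_mul _ (fun i _ => mul_nonneg (hw i) (sq_nonneg _))
        (fun i _ => hw i) (fun i _ => le_of_eq (by ring))
    nlinarith [hw r]
  have hlin : w r * x r ≤ R * S - B := by
    have := add_sum_erase univ (fun i => w i * x i) (mem_univ r)
    linarith
  have hsq : (w r * x r) ^ 2 ≤ 2 * S * (R ^ 2 * S + A) := by
    nlinarith [pow_le_pow_left₀ (mul_nonneg (hw r) hxr) hlin 2, sq_nonneg (R * S + B)]
  rcases (sum_nonneg fun i _ => hw i : 0 ≤ S).eq_or_lt with hS0 | hSpos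
  · have : w r = 0 := by
      have := sum_nonneg fun i (_ : i ∈ univ.erase r) => hw i
      linarith [hw r]
    rw [this, zero_mul, mul_zero, show S = 0 from hS0.symm]
    simpa using hA
  · -- `S * (β * w r * x r²) ≤ w r * (w r * x r²) = (w r * x r)²`
    refine le_of_mul_le_mul_left ?_ hSpos
    nlinarith [mul_le_mul_of_nonneg_right hr (mul_nonneg (hw r) (sq_nonneg (x r)))]

theorem stmt_7_general (m : ℕ)
    (Γ : Set (Fin m → ℝ)) (f : (Fin m → ℝ) → ℝ)
    (hΓopen : IsOpen Γ)
    (hfsmooth : ContDiffOn ℝ (⊤ : ℕ∞) f Γ)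
    (hf1 : ∀ x ∈ Γ, ∀ i, 0 < pd f x i)
    (hf2 : ConcaveOn ℝ Γ f)
    (K : Set (Fin m → ℝ)) (hK : IsCompact K) (hKΓ : K ⊆ Γ)
    (β : ℝ) (hβ : 0 < β) :
    ∃ C : ℝ, 0 < C ∧ ∀ lam ∈ Γ, ∀ μ ∈ K, f lam ≤ f μ →
      ∀ r : Fin m, 0 ≤ lam r → β * ∑ j, pd f lam j ≤ pd f lam r →
      pd f lam r * (lam r) ^ 2
        ≤ C * ((∑ i ∈ Finset.univ.erase r, pd f lam i * (lam i) ^ 2) + ∑ i, pd f lam i) := by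
  obtain ⟨R, hR⟩ := isBounded_iff_forall_norm_le.1 hK.isBounded
  refine ⟨2 * (R ^ 2 + 1) / β, by positivity, fun lam hlam μ hμ hfμ r hr hβr => ?_⟩
  have hdiff : DifferentiableAt ℝ f lam :=
    (hfsmooth.contDiffAt (hΓopen.mem_nhds hlam)).differentiableAt (by simp)
  have hμR : ∀ i, μ i ≤ R := fun i =>
    (le_abs_self _).trans ((norm_le_pi_norm μ i).trans (hR μ hμ))
  have hpd : ∀ i, 0 ≤ pd f lam i := fun i => (hf1 lam hlam i).le
  have hsum : ∑ i, pd f lam i * lam i ≤ R * ∑ i, pd f lam i :=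
    calc ∑ i, pd f lam i * lam i ≤ ∑ i, pd f lam i * μ i :=
          hf2.sum_pd_mul_le_of_le hlam (hKΓ hμ) hdiff hfμ
      _ ≤ ∑ i, pd f lam i * R := by gcongr with i; exacts [hpd i, hμR i]
      _ = R * ∑ i, pd f lam i := by rw [mul_sum]; simp only [mul_comm]
  have hbound := mul_sq_le_of_sum_mul_le hpd hr hsum hβr
  have hA : 0 ≤ ∑ i ∈ univ.erase r, pd f lam i * lam i ^ 2 :=
    sum_nonneg fun i _ => mul_nonneg (hpd i) (sq_nonneg _)
  have hS : 0 ≤ ∑ i, pd f lam i := sum_nonneg fun i _ => hpd i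
  rw [div_mul_eq_mul_div, le_div_iff₀ hβ]
  nlinarith [mul_nonneg (sq_nonneg R) hA]

/-- inequalities (6.12)–(6.14): for compact `K ⊂ Γ` and `β > 0` there is
`C > 0` such that whenever `λ ∈ Γ`, `μ ∈ K` with `f(μ) ≥ f(λ)`, and `r` is an index with
`λ_r ≥ 0` and `f_r(λ) ≥ β ∑ⱼ fⱼ(λ)`, then
`f_r λ_r² ≤ C (∑_{i≠r} fᵢλᵢ² + ∑ᵢ fᵢ)`. -/
theorem stmt_7 (m : ℕ) (hm : 2 ≤ m)
    (Γ : Set (Fin m → ℝ)) (f : (Fin m → ℝ) → ℝ)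
    (hΓopen : IsOpen Γ) (hΓconv : Convex ℝ Γ) (hΓne : Γ.Nonempty)
    (hΓproper : Γ ≠ Set.univ)
    (hΓcone : ∀ t : ℝ, 0 < t → ∀ x ∈ Γ, t • x ∈ Γ)
    (hΓperm : ∀ π : Equiv.Perm (Fin m), ∀ x ∈ Γ, x ∘ π ∈ Γ)
    (hΓpos : {x : Fin m → ℝ | ∀ i, 0 < x i} ⊆ Γ)
    (hfsmooth : ContDiffOn ℝ (⊤ : ℕ∞) f Γ)
    (hfsymm : ∀ π : Equiv.Perm (Fin m), ∀ x ∈ Γ, f (x ∘ π) = f x)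
    (hf1 : ∀ x ∈ Γ, ∀ i, 0 < pd f x i)
    (hf2 : ConcaveOn ℝ Γ f)
    (K : Set (Fin m → ℝ)) (hK : IsCompact K) (hKΓ : K ⊆ Γ)
    (β : ℝ) (hβ : 0 < β) :
    ∃ C : ℝ, 0 < C ∧ ∀ lam ∈ Γ, ∀ μ ∈ K, f lam ≤ f μ →
      ∀ r : Fin m, 0 ≤ lam r → β * ∑ j, pd f lam j ≤ pd f lam r →
      pd f lam r * (lam r) ^ 2
        ≤ C * ((∑ i ∈ Finset.univ.erase r, pd f lam i * (lam i) ^ 2) + ∑ i, pd f lam i) :=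
  stmt_7_general m Γ f hΓopen hfsmooth hf1 hf2 K hK hKΓ β hβ
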